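/- Let f* : ℝ → ℝ be nondecreasing, x_1 < x_2 < ... < x_n real numbers, and y_i = f*(x_{π*(i)}) for a permutation π* of {1,...,n}. Then π = π* minimizes ∑_{i=1}^n (y_i − x_{π(i)})² over all permutations π of {1,...,n}. -/
import Mathlib


/-- In noiseless one-dimensional permuted regression with a nondecreasing
function `f`, the true permutation `π*` minimizes the assignment objective
`∑ i (y i − x (π i))²`. -/
theorem true_permutation_minimizes_assignment {n : ℕ}
    (f : ℝ → ℝ) (hf : Monotone f)
    (x : Fin n → ℝ) (hx : StrictMono x)
    (πstar : Equiv.Perm (Fin n))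
    (y : Fin n → ℝ) (hy : ∀ i, y i = f (x (πstar i))) :
    ∀ π : Equiv.Perm (Fin n),
      ∑ i, (y i - x (πstar i)) ^ 2 ≤ ∑ i, (y i - x (π i)) ^ 2 := by
  intro π
  have hmono : Monovary (fun j => f (x j)) x := fun i j h => hf h.le
  set τ : Equiv.Perm (Fin n) := π * πstar⁻¹ with hτ
  have h1 : ∑ i, (y i - x (πstar i)) ^ 2 = ∑ j, (f (x j) - x j) ^ 2 := by
    rw [← Equiv.sum_comp πstar (fun j => (f (x j) - x j) ^ 2)]
    simp [hy]
  have h2 : ∑ i, (y i - x (π i)) ^ 2 = ∑ j, (f (x j) - x (τ j)) ^ 2 := by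
    rw [← Equiv.sum_comp πstar (fun j => (f (x j) - x (τ j)) ^ 2)]
    simp [hy, hτ]
  have key : ∑ j, f (x j) * x (τ j) ≤ ∑ j, f (x j) * x j :=
    hmono.sum_mul_comp_perm_le_sum_mul
  have hxsq : ∑ j, x (τ j) ^ 2 = ∑ j, x j ^ 2 :=
    Equiv.sum_comp τ (fun j => x j ^ 2)
  have expand : ∀ b : Fin n → ℝ, ∑ j, (f (x j) - b j) ^ 2 =
      ∑ j, (f (x j)) ^ 2 - 2 * ∑ j, f (x j) * b j + ∑ j, (b j) ^ 2 := by
    intro b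
    rw [Finset.mul_sum, ← Finset.sum_sub_distrib, ← Finset.sum_add_distrib]
    exact Finset.sum_congr rfl fun j _ => by ring
  rw [h1, h2, expand x, expand (fun j => x (τ j))]
  linarith [key, hxsq]
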